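/- arXiv:2310.02347 — 12 statements merged into one kernel-verified Lean document; each statement's English description precedes it below -/
import Mathlib

section
/- The polyhedron P₁ = {(ψ,z⁺,z⁻,θ,δp) ∈ ℝ⁵ : ψ=1, z⁺=1, z⁻=0, 0 ≤ θ ≤ θ̄, δB̲·θ ≤ δp ≤ δB̄·θ}, where θ̄ > 0 and δB̲ < δB̄, equals the convex hull of the three points (1,1,0,0,0), (1,1,0,θ̄,θ̄·δB̲), and (1,1,0,θ̄,θ̄·δB̄). -/
abbrev Pt := ℝ × ℝ × ℝ × ℝ × ℝ

def P0 (tl tu : ℝ) : Set Pt :=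
  {p | p.1 = 0 ∧ p.2.1 = 0 ∧ p.2.2.1 = 0 ∧ p.2.2.2.2 = 0 ∧ tl ≤ p.2.2.2.1 ∧ p.2.2.2.1 ≤ tu}

def P1 (tu bl bu : ℝ) : Set Pt :=
  {p | p.1 = 1 ∧ p.2.1 = 1 ∧ p.2.2.1 = 0 ∧ 0 ≤ p.2.2.2.1 ∧ p.2.2.2.1 ≤ tu ∧
    bl * p.2.2.2.1 ≤ p.2.2.2.2 ∧ p.2.2.2.2 ≤ bu * p.2.2.2.1}

def P2 (tl bl bu : ℝ) : Set Pt :=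
  {p | p.1 = 1 ∧ p.2.1 = 0 ∧ p.2.2.1 = 1 ∧ tl ≤ p.2.2.2.1 ∧ p.2.2.2.1 ≤ 0 ∧
    bu * p.2.2.2.1 ≤ p.2.2.2.2 ∧ p.2.2.2.2 ≤ bl * p.2.2.2.1}

lemma convex_P1 (tu bl bu : ℝ) : Convex ℝ (P1 tu bl bu) := by
  rintro ⟨x1, x2, x3, x4, x5⟩ ⟨hx1, hx2, hx3, hx4, hx5, hx6, hx7⟩
    ⟨y1, y2, y3, y4, y5⟩ ⟨hy1, hy2, hy3, hy4, hy5, hy6, hy7⟩ a b ha hb hab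
  simp only [P1, Set.mem_setOf_eq, Prod.smul_mk, Prod.mk_add_mk, smul_eq_mul] at *
  refine ⟨by nlinarith, by nlinarith, by nlinarith, by nlinarith, by nlinarith,
    by nlinarith, by nlinarith⟩

theorem stmt_1 (tu bl bu : ℝ) (h1 : 0 < tu) (h2 : bl < bu) :
    P1 tu bl bu = convexHull ℝ
      ({((1:ℝ),(1:ℝ),(0:ℝ),(0:ℝ),(0:ℝ)), ((1:ℝ),(1:ℝ),(0:ℝ),tu,tu*bl),
        ((1:ℝ),(1:ℝ),(0:ℝ),tu,tu*bu)} : Set Pt) := by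
  apply le_antisymm
  · rintro ⟨x1, x2, x3, t, d⟩ ⟨hx1, hx2, hx3, ht0, htu, hd1, hd2⟩
    subst hx1; subst hx2; subst hx3
    dsimp only at ht0 htu hd1 hd2
    set c : ℝ := (d - bl * t) / (tu * (bu - bl)) with hc
    set b : ℝ := (bu * t - d) / (tu * (bu - bl)) with hb
    set a : ℝ := 1 - t / tu with ha
    have hden : 0 < tu * (bu - bl) := by nlinarith
    have hc0 : 0 ≤ c := div_nonneg (by linarith) hden.le
    have hb0 : 0 ≤ b := div_nonneg (by linarith) hden.le
    have ha0 : 0 ≤ a := by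
      have h : t / tu ≤ 1 := (div_le_one h1).mpr htu
      rw [ha]; linarith
    have hbc : b + c = t / tu := by
      rw [hb, hc, ← add_div, div_eq_div_iff hden.ne' h1.ne']
      ring
    have hsum : a + b + c = 1 := by
      rw [add_assoc, hbc]; simp [ha]
    have hpt : ((1:ℝ), (1:ℝ), (0:ℝ), t, d) =
        a • ((1:ℝ),(1:ℝ),(0:ℝ),(0:ℝ),(0:ℝ)) + b • ((1:ℝ),(1:ℝ),(0:ℝ),tu,tu*bl)
        + c • ((1:ℝ),(1:ℝ),(0:ℝ),tu,tu*bu) := by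
      simp only [Prod.smul_mk, Prod.mk_add_mk, smul_eq_mul, Prod.mk.injEq]
      refine ⟨by linarith, by linarith, by ring, ?_, ?_⟩
      · have : (b + c) * tu = t := by
          rw [hbc]; field_simp
        simp only [mul_zero, zero_add]
        linarith [this]
      · simp only [mul_zero, zero_add]
        rw [hb, hc]
        have hbl : bu - bl ≠ 0 := by linarith
        field_simp
        ring
    rw [hpt]
    have h0 : ((1:ℝ),(1:ℝ),(0:ℝ),(0:ℝ),(0:ℝ)) ∈ convexHull ℝ
        ({((1:ℝ),(1:ℝ),(0:ℝ),(0:ℝ),(0:ℝ)), ((1:ℝ),(1:ℝ),(0:ℝ),tu,tu*bl),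
          ((1:ℝ),(1:ℝ),(0:ℝ),tu,tu*bu)} : Set Pt) :=
      subset_convexHull ℝ _ (by simp)
    have hA : ((1:ℝ),(1:ℝ),(0:ℝ),tu,tu*bl) ∈ convexHull ℝ
        ({((1:ℝ),(1:ℝ),(0:ℝ),(0:ℝ),(0:ℝ)), ((1:ℝ),(1:ℝ),(0:ℝ),tu,tu*bl),
          ((1:ℝ),(1:ℝ),(0:ℝ),tu,tu*bu)} : Set Pt) :=
      subset_convexHull ℝ _ (by simp)
    have hB : ((1:ℝ),(1:ℝ),(0:ℝ),tu,tu*bu) ∈ convexHull ℝ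
        ({((1:ℝ),(1:ℝ),(0:ℝ),(0:ℝ),(0:ℝ)), ((1:ℝ),(1:ℝ),(0:ℝ),tu,tu*bl),
          ((1:ℝ),(1:ℝ),(0:ℝ),tu,tu*bu)} : Set Pt) :=
      subset_convexHull ℝ _ (by simp)
    have := (convex_convexHull ℝ ({((1:ℝ),(1:ℝ),(0:ℝ),(0:ℝ),(0:ℝ)), ((1:ℝ),(1:ℝ),(0:ℝ),tu,tu*bl),
          ((1:ℝ),(1:ℝ),(0:ℝ),tu,tu*bu)} : Set Pt)).sum_mem (t := Finset.univ)
      (w := ![a, b, c])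
      (z := ![((1:ℝ),(1:ℝ),(0:ℝ),(0:ℝ),(0:ℝ)), ((1:ℝ),(1:ℝ),(0:ℝ),tu,tu*bl),
        ((1:ℝ),(1:ℝ),(0:ℝ),tu,tu*bu)])
      (by intro i _; fin_cases i <;> simp [ha0, hb0, hc0])
      (by simp [Fin.sum_univ_three]; linarith)
      (by intro i _; fin_cases i <;> exact (by assumption))
    simpa [Fin.sum_univ_three, add_assoc] using this
  · apply convexHull_min _ (convex_P1 tu bl bu)
    rintro p (rfl | rfl | rfl) <;> dsimp only [P1, Set.mem_setOf_eq] <;>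
      refine ⟨rfl, rfl, rfl, by linarith, by linarith, by nlinarith, by nlinarith⟩
end

section
/- The polyhedron P₂ = {(ψ,z⁺,z⁻,θ,δp) ∈ ℝ⁵ : ψ=1, z⁺=0, z⁻=1, θ̲ ≤ θ ≤ 0, δB̄·θ ≤ δp ≤ δB̲·θ}, where θ̲ < 0 and δB̲ < δB̄, equals the convex hull of the three points (1,0,1,0,0), (1,0,1,θ̲,θ̲·δB̲), and (1,0,1,θ̲,θ̲·δB̄). -/
lemma convex_P2 (tl bl bu : ℝ) : Convex ℝ (P2 tl bl bu) := by
  rintro x ⟨hx1, hx2, hx3, hx4, hx5, hx6, hx7⟩ y ⟨hy1, hy2, hy3, hy4, hy5, hy6, hy7⟩ a b ha hb hab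
  refine ⟨?_, ?_, ?_, ?_, ?_, ?_, ?_⟩ <;>
    simp only [Prod.fst_add, Prod.snd_add, Prod.smul_fst, Prod.smul_snd, smul_eq_mul,
      hx1, hx2, hx3, hy1, hy2, hy3]
  · linarith
  · linarith
  · linarith
  · nlinarith
  · nlinarith
  · nlinarith [mul_le_mul_of_nonneg_left hx6 ha, mul_le_mul_of_nonneg_left hy6 hb]
  · nlinarith [mul_le_mul_of_nonneg_left hx7 ha, mul_le_mul_of_nonneg_left hy7 hb]

theorem stmt_2 (tl bl bu : ℝ) (h1 : tl < 0) (h2 : bl < bu) :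
    P2 tl bl bu = convexHull ℝ
      ({((1:ℝ),(0:ℝ),(1:ℝ),(0:ℝ),(0:ℝ)), ((1:ℝ),(0:ℝ),(1:ℝ),tl,tl*bl),
        ((1:ℝ),(0:ℝ),(1:ℝ),tl,tl*bu)} : Set Pt) := by
  apply le_antisymm
  · rintro ⟨x1, x2, x3, θ, dp⟩ ⟨hp1, hp2, hp3, hp4, hp5, hp6, hp7⟩
    simp only at hp1 hp2 hp3 hp4 hp5 hp6 hp7
    subst hp1 hp2 hp3
    set D : ℝ := tl * (bl - bu) with hD
    have hDpos : 0 < D := by nlinarith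
    set l : ℝ := (dp - θ * bu) / D with hl
    set m : ℝ := (θ * bl - dp) / D with hm
    have hl0 : 0 ≤ l := div_nonneg (by nlinarith) hDpos.le
    have hm0 : 0 ≤ m := div_nonneg (by nlinarith) hDpos.le
    have hlm : l + m = θ / tl := by
      rw [hl, hm, ← add_div, hD]
      rw [div_eq_div_iff (by positivity) h1.ne]
      ring
    have hθtl : θ / tl ≤ 1 := by
      rw [show (1:ℝ) = tl / tl from (div_self h1.ne).symm]
      exact div_le_div_of_nonpos_of_le h1.le hp4
    have hw0 : (0:ℝ) ≤ 1 - (l + m) := by rw [hlm]; linarith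
    have hsum : (1 - (l + m)) + l + m = 1 := by ring
    have key : ((1:ℝ), (0:ℝ), (1:ℝ), θ, dp) =
        (1 - (l + m)) • ((1:ℝ),(0:ℝ),(1:ℝ),(0:ℝ),(0:ℝ)) +
        l • ((1:ℝ),(0:ℝ),(1:ℝ),tl,tl*bl) + m • ((1:ℝ),(0:ℝ),(1:ℝ),tl,tl*bu) := by
      have hltl : (l + m) * tl = θ := by
        rw [hlm, div_mul_cancel₀ _ h1.ne]
      have hdp : l * (tl * bl) + m * (tl * bu) = dp := by
        rw [hl, hm]
        field_simp
        ring
      refine Prod.ext ?_ (Prod.ext ?_ (Prod.ext ?_ (Prod.ext ?_ ?_))) <;>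
        simp [Prod.fst_add, Prod.snd_add, Prod.smul_fst, Prod.smul_snd, smul_eq_mul] <;>
        nlinarith [hltl, hdp]
    rw [key]
    have hmem := Finset.centerMass_mem_convexHull (Finset.univ : Finset (Fin 3))
      (w := ![1 - (l + m), l, m])
      (z := ![((1:ℝ),(0:ℝ),(1:ℝ),(0:ℝ),(0:ℝ)), ((1:ℝ),(0:ℝ),(1:ℝ),tl,tl*bl),
        ((1:ℝ),(0:ℝ),(1:ℝ),tl,tl*bu)])
      (s := ({((1:ℝ),(0:ℝ),(1:ℝ),(0:ℝ),(0:ℝ)), ((1:ℝ),(0:ℝ),(1:ℝ),tl,tl*bl),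
        ((1:ℝ),(0:ℝ),(1:ℝ),tl,tl*bu)} : Set Pt))
      (fun i _ => by fin_cases i <;> simp <;> linarith)
      (by simp [Fin.sum_univ_three]; linarith)
      (fun i _ => by fin_cases i <;> simp)
    rwa [Finset.centerMass_eq_of_sum_1, Fin.sum_univ_three] at hmem
    · simpa using by simp [Fin.sum_univ_three]; linarith
  · apply convexHull_min _ (convex_P2 tl bl bu)
    rintro p (rfl | rfl | rfl) <;>
      refine ⟨rfl, rfl, rfl, ?_, ?_, ?_, ?_⟩ <;> simp <;> nlinarith
end

section
/- The inequality θ̄·z⁻ + θ ≤ θ̄ is valid on P₀ ∪ P₁ ∪ P₂, and hence on conv(P₀ ∪ P₁ ∪ P₂). -/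
def cutHalfSpace (tu : ℝ) : Set Pt :=
  {p | tu * p.2.2.1 + p.2.2.2.1 ≤ tu}

theorem convex_cutHalfSpace (tu : ℝ) : Convex ℝ (cutHalfSpace tu) :=
  convex_halfSpace_le
    ⟨fun p q => by simp only [Prod.snd_add, Prod.fst_add]; ring,
      fun c p => by simp only [Prod.smul_snd, Prod.smul_fst, smul_eq_mul]; ring⟩ tu

theorem P0_subset_cutHalfSpace (tl tu : ℝ) : P0 tl tu ⊆ cutHalfSpace tu := by
  rintro p ⟨-, -, hz, -, -, hθ⟩
  simp only [cutHalfSpace, Set.mem_ofPred_eq, hz]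
  linarith

theorem P1_subset_cutHalfSpace (tu bl bu : ℝ) : P1 tu bl bu ⊆ cutHalfSpace tu := by
  rintro p ⟨-, -, hz, -, hθ, -, -⟩
  simp only [cutHalfSpace, Set.mem_ofPred_eq, hz]
  linarith

theorem P2_subset_cutHalfSpace (tl tu bl bu : ℝ) : P2 tl bl bu ⊆ cutHalfSpace tu := by
  rintro p ⟨-, -, hz, -, hθ, -, -⟩
  simp only [cutHalfSpace, Set.mem_ofPred_eq, hz]
  linarith

theorem stmt_4_general (tl tu bl bu : ℝ) :
    (∀ p ∈ P0 tl tu ∪ P1 tu bl bu ∪ P2 tl bl bu,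
      tu * p.2.2.1 + p.2.2.2.1 ≤ tu) ∧
    (∀ p ∈ convexHull ℝ (P0 tl tu ∪ P1 tu bl bu ∪ P2 tl bl bu),
      tu * p.2.2.1 + p.2.2.2.1 ≤ tu) := by
  have hunion : P0 tl tu ∪ P1 tu bl bu ∪ P2 tl bl bu ⊆ cutHalfSpace tu :=
    Set.union_subset
      (Set.union_subset (P0_subset_cutHalfSpace tl tu) (P1_subset_cutHalfSpace tu bl bu))
      (P2_subset_cutHalfSpace tl tu bl bu)
  exact ⟨hunion, convexHull_min hunion (convex_cutHalfSpace tu)⟩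

theorem stmt_4 (tl tu bl bu : ℝ) (h1 : tl < 0) (h2 : 0 < tu) (h3 : bl < 0) (h4 : 0 < bu) :
    (∀ p ∈ P0 tl tu ∪ P1 tu bl bu ∪ P2 tl bl bu,
      tu * p.2.2.1 + p.2.2.2.1 ≤ tu) ∧
    (∀ p ∈ convexHull ℝ (P0 tl tu ∪ P1 tu bl bu ∪ P2 tl bl bu),
      tu * p.2.2.1 + p.2.2.2.1 ≤ tu) :=
  stmt_4_general tl tu bl bu
end

section
/- The inequality δp ≤ θ̄·δB̄·z⁺ + θ̲·δB̲·z⁻ is valid on P₀ ∪ P₁ ∪ P₂, and hence on conv(P₀ ∪ P₁ ∪ P₂). -/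
/-! Each of `P₀, P₁, P₂` satisfies the cut: on `P₀` both sides vanish, on `P₁` the bounds
`δp ≤ δB̄·θ ≤ δB̄·θ̄` use `δB̄ ≥ 0`, and on `P₂` the bounds `δp ≤ δB̲·θ ≤ δB̲·θ̲` use `δB̲ ≤ 0`.
The points satisfying the cut form a half-space, so the cut also holds on the convex hull. -/

theorem convex_setOf_le_cut (a b : ℝ) :
    Convex ℝ {p : Pt | p.2.2.2.2 ≤ a * p.2.1 + b * p.2.2.1} := by
  have hlin : IsLinearMap ℝ fun p : Pt => p.2.2.2.2 - (a * p.2.1 + b * p.2.2.1) :=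
    ⟨fun p q => by simp only [Prod.fst_add, Prod.snd_add]; ring,
     fun c p => by simp only [Prod.smul_fst, Prod.smul_snd, smul_eq_mul]; ring⟩
  simpa only [sub_nonpos] using convex_halfSpace_le hlin 0

theorem cut_of_mem_P0 {tl tu a b : ℝ} {p : Pt} (hp : p ∈ P0 tl tu) :
    p.2.2.2.2 ≤ a * p.2.1 + b * p.2.2.1 := by
  obtain ⟨-, hzp, hzm, hδp, -⟩ := hp
  simp [hzp, hzm, hδp]

theorem cut_of_mem_P1 {tu bl bu b : ℝ} (hbu : 0 ≤ bu) {p : Pt} (hp : p ∈ P1 tu bl bu) :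
    p.2.2.2.2 ≤ tu * bu * p.2.1 + b * p.2.2.1 := by
  obtain ⟨-, hzp, hzm, -, hθ, -, hδp⟩ := hp
  rw [hzp, hzm]
  nlinarith

theorem cut_of_mem_P2 {tl bl bu a : ℝ} (hbl : bl ≤ 0) {p : Pt} (hp : p ∈ P2 tl bl bu) :
    p.2.2.2.2 ≤ a * p.2.1 + tl * bl * p.2.2.1 := by
  obtain ⟨-, hzp, hzm, hθ, -, -, hδp⟩ := hp
  rw [hzp, hzm]
  nlinarith

theorem stmt_6_general (tl tu bl bu : ℝ) (h3 : bl < 0) (h4 : 0 < bu) :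
    (∀ p ∈ P0 tl tu ∪ P1 tu bl bu ∪ P2 tl bl bu,
      p.2.2.2.2 ≤ tu * bu * p.2.1 + tl * bl * p.2.2.1) ∧
    (∀ p ∈ convexHull ℝ (P0 tl tu ∪ P1 tu bl bu ∪ P2 tl bl bu),
      p.2.2.2.2 ≤ tu * bu * p.2.1 + tl * bl * p.2.2.1) := by
  have hvalid : ∀ p ∈ P0 tl tu ∪ P1 tu bl bu ∪ P2 tl bl bu,
      p.2.2.2.2 ≤ tu * bu * p.2.1 + tl * bl * p.2.2.1 := by
    rintro p ((hp | hp) | hp)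
    · exact cut_of_mem_P0 hp
    · exact cut_of_mem_P1 h4.le hp
    · exact cut_of_mem_P2 h3.le hp
  exact ⟨hvalid, fun p hp => convexHull_min hvalid (convex_setOf_le_cut _ _) hp⟩

theorem stmt_6 (tl tu bl bu : ℝ) (h1 : tl < 0) (h2 : 0 < tu) (h3 : bl < 0) (h4 : 0 < bu) :
    (∀ p ∈ P0 tl tu ∪ P1 tu bl bu ∪ P2 tl bl bu,
      p.2.2.2.2 ≤ tu * bu * p.2.1 + tl * bl * p.2.2.1) ∧
    (∀ p ∈ convexHull ℝ (P0 tl tu ∪ P1 tu bl bu ∪ P2 tl bl bu),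
      p.2.2.2.2 ≤ tu * bu * p.2.1 + tl * bl * p.2.2.1) :=
  stmt_6_general tl tu bl bu h3 h4
end

section
/- The inequality θ̄·δB̲·z⁺ + θ̄·δB̄·z⁻ + δB̄·θ − δp ≤ θ̄·δB̄ is valid on P₀ ∪ P₁ ∪ P₂, and hence on conv(P₀ ∪ P₁ ∪ P₂). -/
/-! A linear inequality valid on a set is valid on its convex hull, since its solution set is a
half-space. On the pieces: over `P₀` the inequality reads `δB̄ θ ≤ θ̄ δB̄`; over `P₁` it follows from
`δp ≥ δB̲ θ` and `(δB̄ - δB̲)(θ̄ - θ) ≥ 0`; over `P₂` it is exactly `δB̄ θ ≤ δp`. -/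

theorem forall_mem_convexHull_le_of_isLinearMap {𝕜 E β : Type*} [Semiring 𝕜] [PartialOrder 𝕜]
    [AddCommMonoid E] [Module 𝕜 E] [AddCommMonoid β] [PartialOrder β]
    [IsOrderedAddMonoid β] [Module 𝕜 β] [PosSMulMono 𝕜 β] {f : E → β} (hf : IsLinearMap 𝕜 f)
    {s : Set E} {r : β} (hs : ∀ p ∈ s, f p ≤ r) : ∀ p ∈ convexHull 𝕜 s, f p ≤ r :=
  fun _ hp => convexHull_min hs (convex_halfSpace_le hf r) hp

def cutForm (tu bl bu : ℝ) (p : Pt) : ℝ :=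
  tu * bl * p.2.1 + tu * bu * p.2.2.1 + bu * p.2.2.2.1 - p.2.2.2.2

theorem isLinearMap_cutForm (tu bl bu : ℝ) : IsLinearMap ℝ (cutForm tu bl bu) where
  map_add p q := by simp only [cutForm, Prod.snd_add, Prod.fst_add]; ring
  map_smul c p := by simp only [cutForm, Prod.smul_snd, Prod.smul_fst, smul_eq_mul]; ring

theorem cutForm_le_of_mem_P0 {tl tu bl bu : ℝ} (hbu : 0 ≤ bu) {p : Pt} (hp : p ∈ P0 tl tu) :
    cutForm tu bl bu p ≤ tu * bu := by
  obtain ⟨-, hz₁, hz₂, hδ, -, hθ⟩ := hp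
  simp only [cutForm, hz₁, hz₂, hδ]
  linarith [mul_le_mul_of_nonneg_left hθ hbu]

theorem cutForm_le_of_mem_P1 {tu bl bu : ℝ} (hb : bl ≤ bu) {p : Pt} (hp : p ∈ P1 tu bl bu) :
    cutForm tu bl bu p ≤ tu * bu := by
  obtain ⟨-, hz₁, hz₂, -, hθ, hδ, -⟩ := hp
  simp only [cutForm, hz₁, hz₂]
  nlinarith [mul_nonneg (sub_nonneg.2 hb) (sub_nonneg.2 hθ)]

theorem cutForm_le_of_mem_P2 {tl tu bl bu : ℝ} {p : Pt} (hp : p ∈ P2 tl bl bu) :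
    cutForm tu bl bu p ≤ tu * bu := by
  obtain ⟨-, hz₁, hz₂, -, -, hδ, -⟩ := hp
  simp only [cutForm, hz₁, hz₂]
  linarith

theorem stmt_7_general (tl tu bl bu : ℝ) (h3 : bl < 0) (h4 : 0 < bu) :
    (∀ p ∈ P0 tl tu ∪ P1 tu bl bu ∪ P2 tl bl bu,
      tu * bl * p.2.1 + tu * bu * p.2.2.1 + bu * p.2.2.2.1 - p.2.2.2.2 ≤ tu * bu) ∧
    (∀ p ∈ convexHull ℝ (P0 tl tu ∪ P1 tu bl bu ∪ P2 tl bl bu),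
      tu * bl * p.2.1 + tu * bu * p.2.2.1 + bu * p.2.2.2.1 - p.2.2.2.2 ≤ tu * bu) := by
  have valid : ∀ p ∈ P0 tl tu ∪ P1 tu bl bu ∪ P2 tl bl bu, cutForm tu bl bu p ≤ tu * bu := by
    rintro p ((hp | hp) | hp)
    · exact cutForm_le_of_mem_P0 h4.le hp
    · exact cutForm_le_of_mem_P1 (h3.trans h4).le hp
    · exact cutForm_le_of_mem_P2 hp
  exact ⟨valid, forall_mem_convexHull_le_of_isLinearMap (isLinearMap_cutForm tu bl bu) valid⟩

theorem stmt_7 (tl tu bl bu : ℝ) (h1 : tl < 0) (h2 : 0 < tu) (h3 : bl < 0) (h4 : 0 < bu) :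
    (∀ p ∈ P0 tl tu ∪ P1 tu bl bu ∪ P2 tl bl bu,
      tu * bl * p.2.1 + tu * bu * p.2.2.1 + bu * p.2.2.2.1 - p.2.2.2.2 ≤ tu * bu) ∧
    (∀ p ∈ convexHull ℝ (P0 tl tu ∪ P1 tu bl bu ∪ P2 tl bl bu),
      tu * bl * p.2.1 + tu * bu * p.2.2.1 + bu * p.2.2.2.1 - p.2.2.2.2 ≤ tu * bu) :=
  stmt_7_general tl tu bl bu h3 h4
end

section
/- The inequality θ̄·δB̄·z⁺ + θ̄·δB̲·z⁻ + δB̲·θ − δp ≥ θ̄·δB̲ is valid on P₀ ∪ P₁ ∪ P₂, and hence on conv(P₀ ∪ P₁ ∪ P₂). -/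
theorem le_of_mem_convexHull_of_isLinearMap {𝕜 E β : Type*} [Semiring 𝕜] [PartialOrder 𝕜]
    [AddCommMonoid E] [Module 𝕜 E] [AddCommMonoid β] [PartialOrder β] [IsOrderedAddMonoid β]
    [Module 𝕜 β] [PosSMulMono 𝕜 β] {f : E → β} (hf : IsLinearMap 𝕜 f) {s : Set E} {r : β}
    (hs : ∀ x ∈ s, r ≤ f x) : ∀ x ∈ convexHull 𝕜 s, r ≤ f x :=
  fun _ hx => convexHull_min hs (convex_halfSpace_ge hf r) hx

-- `tu, bl, bu` stand for `θ̄, δB̲, δB̄`, and `p = (ψ, z⁺, z⁻, θ, δp)`.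
def cutLhs (tu bl bu : ℝ) (p : Pt) : ℝ :=
  tu * bu * p.2.1 + tu * bl * p.2.2.1 + bl * p.2.2.2.1 - p.2.2.2.2

theorem isLinearMap_cutLhs (tu bl bu : ℝ) : IsLinearMap ℝ (cutLhs tu bl bu) where
  map_add x y := by simp only [cutLhs, Prod.snd_add, Prod.fst_add]; ring
  map_smul c x := by simp only [cutLhs, Prod.smul_snd, Prod.smul_fst, smul_eq_mul]; ring

section Validity

variable {tl tu bl bu : ℝ} {p : Pt}

theorem cutLhs_ge_of_mem_P0 (hbl : bl ≤ 0) (hp : p ∈ P0 tl tu) : tu * bl ≤ cutLhs tu bl bu p := by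
  obtain ⟨-, hzp, hzm, hdp, -, hθ⟩ := hp
  simp only [cutLhs, hzp, hzm, hdp]
  nlinarith [mul_nonneg_of_nonpos_of_nonpos hbl (sub_nonpos.2 hθ)]

theorem cutLhs_ge_of_mem_P1 (hb : bl ≤ bu) (hp : p ∈ P1 tu bl bu) :
    tu * bl ≤ cutLhs tu bl bu p := by
  obtain ⟨-, hzp, hzm, -, hθ, -, hdp⟩ := hp
  simp only [cutLhs, hzp, hzm]
  -- the slack is `(δB̄ - δB̲)(θ̄ - θ)` plus `δB̄ θ - δp`
  nlinarith [mul_nonneg (sub_nonneg.2 hb) (sub_nonneg.2 hθ)]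

theorem cutLhs_ge_of_mem_P2 (hp : p ∈ P2 tl bl bu) : tu * bl ≤ cutLhs tu bl bu p := by
  obtain ⟨-, hzp, hzm, -, -, -, hdp⟩ := hp
  simp only [cutLhs, hzp, hzm]
  linarith

end Validity

theorem stmt_8_general (tl tu bl bu : ℝ) (h3 : bl < 0) (h4 : 0 < bu) :
    (∀ p ∈ P0 tl tu ∪ P1 tu bl bu ∪ P2 tl bl bu,
      tu * bu * p.2.1 + tu * bl * p.2.2.1 + bl * p.2.2.2.1 - p.2.2.2.2 ≥ tu * bl) ∧
    (∀ p ∈ convexHull ℝ (P0 tl tu ∪ P1 tu bl bu ∪ P2 tl bl bu),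
      tu * bu * p.2.1 + tu * bl * p.2.2.1 + bl * p.2.2.2.1 - p.2.2.2.2 ≥ tu * bl) := by
  have valid : ∀ p ∈ P0 tl tu ∪ P1 tu bl bu ∪ P2 tl bl bu, tu * bl ≤ cutLhs tu bl bu p := by
    rintro p ((hp | hp) | hp)
    · exact cutLhs_ge_of_mem_P0 h3.le hp
    · exact cutLhs_ge_of_mem_P1 (h3.trans h4).le hp
    · exact cutLhs_ge_of_mem_P2 hp
  exact ⟨valid, le_of_mem_convexHull_of_isLinearMap (isLinearMap_cutLhs tu bl bu) valid⟩

theorem stmt_8 (tl tu bl bu : ℝ) (h1 : tl < 0) (h2 : 0 < tu) (h3 : bl < 0) (h4 : 0 < bu) :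
    (∀ p ∈ P0 tl tu ∪ P1 tu bl bu ∪ P2 tl bl bu,
      tu * bu * p.2.1 + tu * bl * p.2.2.1 + bl * p.2.2.2.1 - p.2.2.2.2 ≥ tu * bl) ∧
    (∀ p ∈ convexHull ℝ (P0 tl tu ∪ P1 tu bl bu ∪ P2 tl bl bu),
      tu * bu * p.2.1 + tu * bl * p.2.2.1 + bl * p.2.2.2.1 - p.2.2.2.2 ≥ tu * bl) :=
  stmt_8_general tl tu bl bu h3 h4
end

section
/- Let S be the set of points (ψ,z⁺,z⁻,θ,δp) ∈ {0,1}³ × ℝ² satisfying z⁺ + z⁻ = ψ, θ̲·z⁺ + θ ≥ θ̲, θ̄·z⁻ + θ ≤ θ̄, δp ≥ θ̄·δB̲·z⁺ + θ̲·δB̄·z⁻, δp ≤ θ̄·δB̄·z⁺ + θ̲·δB̲·z⁻, θ̄·δB̲·z⁺ + θ̄·δB̄·z⁻ + δB̄·θ − δp ≤ θ̄·δB̄, θ̄·δB̄·z⁺ + θ̄·δB̲·z⁻ + δB̲·θ − δp ≥ θ̄·δB̲, θ̲·δB̄·z⁺ + θ̲·δB̲·z⁻ + δB̄·θ − δp ≥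 θ̲·δB̄, and θ̲·δB̲·z⁺ + θ̲·δB̄·z⁻ + δB̲·θ − δp ≤ θ̲·δB̲. Then S = P₀ ∪ P₁ ∪ P₂. -/
def MilpConstraints (tl tu bl bu zp zm θ δp : ℝ) : Prop :=
  tl * zp + θ ≥ tl ∧
  tu * zm + θ ≤ tu ∧
  δp ≥ tu * bl * zp + tl * bu * zm ∧
  δp ≤ tu * bu * zp + tl * bl * zm ∧
  tu * bl * zp + tu * bu * zm + bu * θ - δp ≤ tu * bu ∧
  tu * bu * zp + tu * bl * zm + bl * θ - δp ≥ tu * bl ∧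
  tl * bu * zp + tl * bl * zm + bu * θ - δp ≥ tl * bu ∧
  tl * bl * zp + tl * bu * zm + bl * θ - δp ≤ tl * bl

section
variable {tl tu bl bu θ δp : ℝ}

theorem milpConstraints_zero_zero (hbl : bl ≤ 0) (hbu : 0 ≤ bu) :
    MilpConstraints tl tu bl bu 0 0 θ δp ↔ δp = 0 ∧ tl ≤ θ ∧ θ ≤ tu := by
  simp only [MilpConstraints, mul_zero, zero_add, add_zero]
  constructor
  · rintro ⟨h1, h2, h3, h4, -⟩
    exact ⟨le_antisymm h4 h3, h1, h2⟩
  · rintro ⟨rfl, h1, h2⟩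
    refine ⟨h1, h2, le_rfl, le_rfl, ?_, ?_, ?_, ?_⟩ <;> nlinarith

theorem milpConstraints_one_zero (hbl : bl ≤ 0) (hbu : 0 ≤ bu) :
    MilpConstraints tl tu bl bu 1 0 θ δp ↔ 0 ≤ θ ∧ θ ≤ tu ∧ bl * θ ≤ δp ∧ δp ≤ bu * θ := by
  simp only [MilpConstraints, mul_zero, mul_one, add_zero, zero_add]
  constructor
  · rintro ⟨h1, h2, -, -, -, -, h7, h8⟩
    exact ⟨by linarith, h2, by linarith, by linarith⟩
  · rintro ⟨h1, h2, h3, h4⟩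
    refine ⟨?_, h2, ?_, ?_, ?_, ?_, ?_, ?_⟩ <;> nlinarith

theorem milpConstraints_zero_one (hbl : bl ≤ 0) (hbu : 0 ≤ bu) :
    MilpConstraints tl tu bl bu 0 1 θ δp ↔ tl ≤ θ ∧ θ ≤ 0 ∧ bu * θ ≤ δp ∧ δp ≤ bl * θ := by
  simp only [MilpConstraints, mul_zero, mul_one, zero_add]
  constructor
  · rintro ⟨h1, h2, -, -, h5, h6, -, -⟩
    exact ⟨h1, by linarith, by linarith, by linarith⟩
  · rintro ⟨h1, h2, h3, h4⟩
    refine ⟨h1, ?_, ?_, ?_, ?_, ?_, ?_, ?_⟩ <;> nlinarith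

end

theorem stmt_12_general (tl tu bl bu : ℝ) (h3 : bl < 0) (h4 : 0 < bu) :
    {p : Pt | p.1 ∈ ({0, 1} : Set ℝ) ∧ p.2.1 ∈ ({0, 1} : Set ℝ) ∧ p.2.2.1 ∈ ({0, 1} : Set ℝ) ∧
      p.2.1 + p.2.2.1 = p.1 ∧
      tl * p.2.1 + p.2.2.2.1 ≥ tl ∧
      tu * p.2.2.1 + p.2.2.2.1 ≤ tu ∧
      p.2.2.2.2 ≥ tu * bl * p.2.1 + tl * bu * p.2.2.1 ∧
      p.2.2.2.2 ≤ tu * bu * p.2.1 + tl * bl * p.2.2.1 ∧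
      tu * bl * p.2.1 + tu * bu * p.2.2.1 + bu * p.2.2.2.1 - p.2.2.2.2 ≤ tu * bu ∧
      tu * bu * p.2.1 + tu * bl * p.2.2.1 + bl * p.2.2.2.1 - p.2.2.2.2 ≥ tu * bl ∧
      tl * bu * p.2.1 + tl * bl * p.2.2.1 + bu * p.2.2.2.1 - p.2.2.2.2 ≥ tl * bu ∧
      tl * bl * p.2.1 + tl * bu * p.2.2.1 + bl * p.2.2.2.1 - p.2.2.2.2 ≤ tl * bl}
    = P0 tl tu ∪ P1 tu bl bu ∪ P2 tl bl bu := by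
  ext ⟨ψ, zp, zm, θ, δp⟩
  change (_ ∧ _ ∧ _ ∧ _ ∧ MilpConstraints tl tu bl bu zp zm θ δp) ↔ _
  simp only [Set.mem_union, Set.mem_insert_iff, Set.mem_singleton_iff, P0, P1, P2,
    Set.mem_ofPred_eq]
  have hbl := h3.le
  have hbu := h4.le
  constructor
  · rintro ⟨hψ, rfl | rfl, rfl | rfl, rfl, hc⟩
    · exact .inl (.inl ⟨by norm_num, rfl, rfl, (milpConstraints_zero_zero hbl hbu).1 hc⟩)
    · exact .inr ⟨by norm_num, rfl, rfl, (milpConstraints_zero_one hbl hbu).1 hc⟩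
    · exact .inl (.inr ⟨by norm_num, rfl, rfl, (milpConstraints_one_zero hbl hbu).1 hc⟩)
    · norm_num at hψ
  · rintro ((⟨rfl, rfl, rfl, h⟩ | ⟨rfl, rfl, rfl, h⟩) | ⟨rfl, rfl, rfl, h⟩)
    · exact ⟨by norm_num, by norm_num, by norm_num, by norm_num,
        (milpConstraints_zero_zero hbl hbu).2 h⟩
    · exact ⟨by norm_num, by norm_num, by norm_num, by norm_num,
        (milpConstraints_one_zero hbl hbu).2 h⟩
    · exact ⟨by norm_num, by norm_num, by norm_num, by norm_num,
        (milpConstraints_zero_one hbl hbu).2 h⟩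

theorem stmt_12 (tl tu bl bu : ℝ) (h1 : tl < 0) (h2 : 0 < tu) (h3 : bl < 0) (h4 : 0 < bu) :
    {p : Pt | p.1 ∈ ({0, 1} : Set ℝ) ∧ p.2.1 ∈ ({0, 1} : Set ℝ) ∧ p.2.2.1 ∈ ({0, 1} : Set ℝ) ∧
      p.2.1 + p.2.2.1 = p.1 ∧
      tl * p.2.1 + p.2.2.2.1 ≥ tl ∧
      tu * p.2.2.1 + p.2.2.2.1 ≤ tu ∧
      p.2.2.2.2 ≥ tu * bl * p.2.1 + tl * bu * p.2.2.1 ∧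
      p.2.2.2.2 ≤ tu * bu * p.2.1 + tl * bl * p.2.2.1 ∧
      tu * bl * p.2.1 + tu * bu * p.2.2.1 + bu * p.2.2.2.1 - p.2.2.2.2 ≤ tu * bu ∧
      tu * bu * p.2.1 + tu * bl * p.2.2.1 + bl * p.2.2.2.1 - p.2.2.2.2 ≥ tu * bl ∧
      tl * bu * p.2.1 + tl * bl * p.2.2.1 + bu * p.2.2.2.1 - p.2.2.2.2 ≥ tl * bu ∧
      tl * bl * p.2.1 + tl * bu * p.2.2.1 + bl * p.2.2.2.1 - p.2.2.2.2 ≤ tl * bl}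
    = P0 tl tu ∪ P1 tu bl bu ∪ P2 tl bl bu :=
  stmt_12_general tl tu bl bu h3 h4
end

section
/- The point (0,0,0,θ̄,0) is an extreme point of conv(P₀ ∪ P₁ ∪ P₂), i.e., it cannot be written as a convex combination λx + (1−λ)y with 0 < λ < 1 and x ≠ y, x, y ∈ conv(P₀ ∪ P₁ ∪ P₂). -/
/-! The coordinate `ψ` is nonnegative on `P₀ ∪ P₁ ∪ P₂` and vanishes exactly on `P₀`, so
`{ψ = 0}` cuts an extreme subset out of the convex hull, and that subset lies in the ray
`{(0, 0, 0, θ, 0) | θ ≤ θ̄}`. The point is the endpoint of this ray, hence extreme in the ray,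
hence in the extreme subset, hence in the hull. -/

open Set

section

variable {𝕜 E : Type*} [Field 𝕜] [LinearOrder 𝕜] [IsStrictOrderedRing 𝕜]
  [AddCommGroup E] [Module 𝕜 E]

theorem LinearMap.eq_zero_of_mem_openSegment_of_nonneg (f : E →ₗ[𝕜] 𝕜) {x y z : E}
    (hx : 0 ≤ f x) (hy : 0 ≤ f y) (hz : z ∈ openSegment 𝕜 x y) (hfz : f z = 0) :
    f x = 0 ∧ f y = 0 := by
  obtain ⟨a, b, ha, hb, -, rfl⟩ := hz
  rw [map_add, map_smul, map_smul, smul_eq_mul, smul_eq_mul] at hfz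
  obtain ⟨hax, hby⟩ := (add_eq_zero_iff_of_nonneg (mul_nonneg ha.le hx) (mul_nonneg hb.le hy)).1 hfz
  exact ⟨(mul_eq_zero.1 hax).resolve_left ha.ne', (mul_eq_zero.1 hby).resolve_left hb.ne'⟩

theorem convex_setOf_nonneg_and_eq_zero_imp (f : E →ₗ[𝕜] 𝕜) {K : Set E} (hK : Convex 𝕜 K) :
    Convex 𝕜 {x | 0 ≤ f x ∧ (f x = 0 → x ∈ K)} := by
  refine convex_iff_openSegment_subset.2 fun x hx y hy z hz => ⟨?_, fun hfz => ?_⟩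
  · exact (convex_halfSpace_ge f.isLinear 0).openSegment_subset hx.1 hy.1 hz
  · obtain ⟨hfx, hfy⟩ := f.eq_zero_of_mem_openSegment_of_nonneg hx.1 hy.1 hz hfz
    exact hK.openSegment_subset (hx.2 hfx) (hy.2 hfy) hz

theorem isExtreme_inter_setOf_eq_zero (f : E →ₗ[𝕜] 𝕜) {A : Set E} (hA : ∀ x ∈ A, 0 ≤ f x) :
    IsExtreme 𝕜 A (A ∩ {x | f x = 0}) := by
  refine ⟨inter_subset_left, fun x hx y hy z hz hzx => ⟨hx, ?_⟩⟩
  exact (f.eq_zero_of_mem_openSegment_of_nonneg (hA x hx) (hA y hy) hzx hz.2).1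

theorem self_mem_extremePoints_Iic (c : 𝕜) : c ∈ (Iic c).extremePoints 𝕜 := by
  refine mem_extremePoints.2 ⟨self_mem_Iic, fun x (hx : x ≤ c) y (hy : y ≤ c) hc => ?_⟩
  obtain ⟨a, b, ha, hb, hab, h⟩ := hc
  rw [smul_eq_mul, smul_eq_mul] at h
  have hsum : a * (c - x) + b * (c - y) = 0 := by linear_combination c * hab - h
  constructor <;> nlinarith [mul_nonneg ha.le (sub_nonneg.2 hx), mul_nonneg hb.le (sub_nonneg.2 hy)]

end

theorem stmt_13_general (tl tu bl bu : ℝ) :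
    ∀ x ∈ convexHull ℝ (P0 tl tu ∪ P1 tu bl bu ∪ P2 tl bl bu),
    ∀ y ∈ convexHull ℝ (P0 tl tu ∪ P1 tu bl bu ∪ P2 tl bl bu),
    ∀ l : ℝ, 0 < l → l < 1 →
      l • x + (1 - l) • y = (((0:ℝ),(0:ℝ),(0:ℝ),tu,(0:ℝ)) : Pt) → x = y := by
  intro x hx y hy l hl0 hl1 hv
  set S := P0 tl tu ∪ P1 tu bl bu ∪ P2 tl bl bu
  set ψ : Pt →ₗ[ℝ] ℝ := LinearMap.fst ℝ ℝ _
  set K : Set Pt := {0} ×ˢ {0} ×ˢ {0} ×ˢ Iic tu ×ˢ {0}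
  have hK : Convex ℝ K := (convex_singleton 0).prod <| (convex_singleton 0).prod <|
    (convex_singleton 0).prod <| (convex_Iic tu).prod (convex_singleton 0)
  have hSK : convexHull ℝ S ⊆ {p | 0 ≤ ψ p ∧ (ψ p = 0 → p ∈ K)} := by
    refine convexHull_min ?_ (convex_setOf_nonneg_and_eq_zero_imp ψ hK)
    rintro p ((⟨h0, h1, h2, h4, -, h3⟩ | ⟨h0, -⟩) | ⟨h0, -⟩)
    · simp [ψ, K, h0, h1, h2, h3, h4]
    all_goals simp [ψ, h0]
  have hvK : ((0, 0, 0, tu, 0) : Pt) ∈ K.extremePoints ℝ := by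
    simp only [K, extremePoints_prod, extremePoints_singleton]
    exact ⟨rfl, rfl, rfl, self_mem_extremePoints_Iic tu, rfl⟩
  have hvS : ((0, 0, 0, tu, 0) : Pt) ∈ convexHull ℝ S :=
    hv ▸ convex_convexHull ℝ S hx hy hl0.le (sub_nonneg.2 hl1.le) (add_sub_cancel _ _)
  have hvext : ((0, 0, 0, tu, 0) : Pt) ∈ (convexHull ℝ S).extremePoints ℝ :=
    (isExtreme_inter_setOf_eq_zero ψ fun p hp => (hSK hp).1).extremePoints_subset_extremePoints <|
      inter_extremePoints_subset_extremePoints_of_subset (fun p hp => (hSK hp.1).2 hp.2)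
        ⟨⟨hvS, rfl⟩, hvK⟩
  obtain ⟨rfl, rfl⟩ := (mem_extremePoints.1 hvext).2 x hx y hy
    ⟨l, 1 - l, hl0, sub_pos.2 hl1, add_sub_cancel _ _, hv⟩
  rfl

theorem stmt_13 (tl tu bl bu : ℝ) (h1 : tl < 0) (h2 : 0 < tu) (h3 : bl < 0) (h4 : 0 < bu) :
    ∀ x ∈ convexHull ℝ (P0 tl tu ∪ P1 tu bl bu ∪ P2 tl bl bu),
    ∀ y ∈ convexHull ℝ (P0 tl tu ∪ P1 tu bl bu ∪ P2 tl bl bu),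
    ∀ l : ℝ, 0 < l → l < 1 →
      l • x + (1 - l) • y = (((0:ℝ),(0:ℝ),(0:ℝ),tu,(0:ℝ)) : Pt) → x = y :=
  stmt_13_general tl tu bl bu
end

section
/- conv(P₀ ∪ P₁ ∪ P₂) equals the convex hull of the eight points (0,0,0,θ̲,0), (0,0,0,θ̄,0), (1,1,0,0,0), (1,1,0,θ̄,θ̄·δB̲), (1,1,0,θ̄,θ̄·δB̄), (1,0,1,0,0), (1,0,1,θ̲,θ̲·δB̲), (1,0,1,θ̲,θ̲·δB̄). -/
section
variable {E : Type*} [AddCommGroup E] [Module ℝ E]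

theorem Convex.smul_add_smul_add_smul_mem {s : Set E} (hs : Convex ℝ s) {x y z : E}
    (hx : x ∈ s) (hy : y ∈ s) (hz : z ∈ s) {a b c : ℝ} (ha : 0 ≤ a) (hb : 0 ≤ b) (hc : 0 ≤ c)
    (habc : a + b + c = 1) : a • x + b • y + c • z ∈ s := by
  have := hs.sum_mem (t := Finset.univ) (w := ![a, b, c]) (z := ![x, y, z])
    (by intro i _; fin_cases i <;> simpa) (by simp [Fin.sum_univ_three, habc])
    (by intro i _; fin_cases i <;> simpa)
  simpa [Fin.sum_univ_three, add_assoc] using this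

theorem add_smul_add_smul_mem_convexHull (o u v : E) {s d bl bu : ℝ} (hb : bl < bu)
    (hs : s ≤ 1) (hdl : bl * s ≤ d) (hdu : d ≤ bu * s) :
    o + s • u + d • v ∈ convexHull ℝ {o, o + u + bl • v, o + u + bu • v} := by
  have hb' : 0 < bu - bl := sub_pos.2 hb
  -- barycentric coordinates of (s, d) in the triangle (0, 0), (1, bl), (1, bu)
  set w₁ := (bu * s - d) / (bu - bl)
  set w₂ := (d - bl * s) / (bu - bl)
  have hw : w₁ + w₂ = s := by simp only [w₁, w₂]; field_simp; ring
  have hwv : bl * w₁ + bu * w₂ = d := by simp only [w₁, w₂]; field_simp; ring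
  have key :
      o + s • u + d • v = (1 - s) • o + w₁ • (o + u + bl • v) + w₂ • (o + u + bu • v) := by
    rw [← hw, ← hwv]
    module
  rw [key]
  exact (convex_convexHull ℝ _).smul_add_smul_add_smul_mem (subset_convexHull ℝ _ (by simp))
    (subset_convexHull ℝ _ (by simp)) (subset_convexHull ℝ _ (by simp)) (by linarith)
    (div_nonneg (by linarith) hb'.le) (div_nonneg (by linarith) hb'.le) (by linarith)

theorem smul_mem_segment_of_mem_Icc (v : E) {a b t : ℝ} (ht : t ∈ Set.Icc a b) :
    t • v ∈ segment ℝ (a • v) (b • v) := by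
  have := image_segment ℝ (LinearMap.toSpanSingleton ℝ E v).toAffineMap a b
  simp only [LinearMap.coe_toAffineMap, LinearMap.toSpanSingleton_apply] at this
  exact this ▸ Set.mem_image_of_mem _ (Icc_subset_segment ht)
end

theorem mem_convexHull_triangle {a b c t bl bu θ δ : ℝ} (ht : t ≠ 0) (hb : bl < bu)
    (hθ : θ / t ≤ 1) (hδl : bl * (θ / t) ≤ δ / t) (hδu : δ / t ≤ bu * (θ / t)) :
    ((a, b, c, θ, δ) : Pt) ∈
      convexHull ℝ {(a, b, c, 0, 0), (a, b, c, t, t * bl), (a, b, c, t, t * bu)} := by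
  have := add_smul_add_smul_mem_convexHull ((a, b, c, 0, 0) : Pt) (0, 0, 0, t, 0) (0, 0, 0, 0, t)
    hb hθ hδl hδu
  convert this using 1
  · simp [mul_comm t]
  · simp [div_mul_cancel₀ _ ht]

theorem P1_subset_convexHull {tu bl bu : ℝ} (ht : 0 < tu) (hb : bl < bu) :
    P1 tu bl bu ⊆
      convexHull ℝ {(1, 1, 0, 0, 0), (1, 1, 0, tu, tu * bl), (1, 1, 0, tu, tu * bu)} := by
  rintro ⟨ψ, z₁, z₂, θ, δ⟩ ⟨rfl, rfl, rfl, -, hθ, hδl, hδu⟩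
  refine mem_convexHull_triangle ht.ne' hb ((div_le_one ht).2 hθ) ?_ ?_
  · rw [← mul_div_assoc]; exact div_le_div_of_nonneg_right hδl ht.le
  · rw [← mul_div_assoc]; exact div_le_div_of_nonneg_right hδu ht.le

theorem P2_subset_convexHull {tl bl bu : ℝ} (ht : tl < 0) (hb : bl < bu) :
    P2 tl bl bu ⊆
      convexHull ℝ {(1, 0, 1, 0, 0), (1, 0, 1, tl, tl * bl), (1, 0, 1, tl, tl * bu)} := by
  rintro ⟨ψ, z₁, z₂, θ, δ⟩ ⟨rfl, rfl, rfl, hθ, -, hδu, hδl⟩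
  refine mem_convexHull_triangle ht.ne hb ((div_le_one_of_neg ht).2 hθ) ?_ ?_
  · rw [← mul_div_assoc]; exact div_le_div_of_nonpos_of_le ht.le hδl
  · rw [← mul_div_assoc]; exact div_le_div_of_nonpos_of_le ht.le hδu

theorem P0_subset_segment (tl tu : ℝ) :
    P0 tl tu ⊆ segment ℝ (0, 0, 0, tl, 0) (0, 0, 0, tu, 0) := by
  rintro ⟨ψ, z₁, z₂, θ, δ⟩ ⟨rfl, rfl, rfl, rfl, hθ⟩
  simpa using smul_mem_segment_of_mem_Icc ((0, 0, 0, 1, 0) : Pt) hθ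

theorem stmt_14 (tl tu bl bu : ℝ) (h1 : tl < 0) (h2 : 0 < tu) (h3 : bl < 0) (h4 : 0 < bu) :
    convexHull ℝ (P0 tl tu ∪ P1 tu bl bu ∪ P2 tl bl bu) = convexHull ℝ
      ({((0:ℝ),(0:ℝ),(0:ℝ),tl,(0:ℝ)), ((0:ℝ),(0:ℝ),(0:ℝ),tu,(0:ℝ)),
        ((1:ℝ),(1:ℝ),(0:ℝ),(0:ℝ),(0:ℝ)), ((1:ℝ),(1:ℝ),(0:ℝ),tu,tu*bl),
        ((1:ℝ),(1:ℝ),(0:ℝ),tu,tu*bu),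
        ((1:ℝ),(0:ℝ),(1:ℝ),(0:ℝ),(0:ℝ)), ((1:ℝ),(0:ℝ),(1:ℝ),tl,tl*bl),
        ((1:ℝ),(0:ℝ),(1:ℝ),tl,tl*bu)} : Set Pt) := by
  have hb : bl < bu := h3.trans h4
  refine subset_antisymm (convexHull_min ?_ (convex_convexHull ℝ _)) (convexHull_mono ?_)
  · rintro p ((hp | hp) | hp)
    · exact segment_subset_convexHull (by simp) (by simp) (P0_subset_segment tl tu hp)
    · refine convexHull_mono ?_ (P1_subset_convexHull h2 hb hp)
      intro; simp only [Set.mem_insert_iff, Set.mem_singleton_iff]; tauto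
    · refine convexHull_mono ?_ (P2_subset_convexHull h1 hb hp)
      intro; simp only [Set.mem_insert_iff, Set.mem_singleton_iff]; tauto
  · simp only [Set.insert_subset_iff, Set.singleton_subset_iff, Set.mem_union, P0, P1, P2,
      Set.mem_ofPred_eq]
    norm_num
    and_intros <;> nlinarith
end

section
/- The affine hull of conv(P₀ ∪ P₁ ∪ P₂) is contained in the hyperplane {(ψ,z⁺,z⁻,θ,δp) : z⁺ + z⁻ = ψ}, and conv(P₀ ∪ P₁ ∪ P₂) has affine dimension exactly 4. -/
/-- The linear functional `z⁺ + z⁻ - ψ`. -/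
def fhyp : Pt →ₗ[ℝ] ℝ where
  toFun p := p.2.1 + p.2.2.1 - p.1
  map_add' p q := by simp; ring
  map_smul' c p := by simp; ring

lemma fhyp_surj : Function.Surjective fhyp := by
  intro c
  exact ⟨(0, c, 0, 0, 0), by simp [fhyp]⟩

lemma finrank_ker_fhyp : Module.finrank ℝ (LinearMap.ker fhyp) = 4 := by
  have h := LinearMap.finrank_range_add_finrank_ker fhyp
  rw [LinearMap.range_eq_top.mpr fhyp_surj] at h
  simp only [finrank_top, Module.finrank_self] at h
  have h5 : Module.finrank ℝ Pt = 5 := by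
    simp [Pt, Module.finrank_prod]
  omega

theorem stmt_15 (tl tu bl bu : ℝ) (h1 : tl < 0) (h2 : 0 < tu) (h3 : bl < 0) (h4 : 0 < bu) :
    (∀ p ∈ affineSpan ℝ (convexHull ℝ (P0 tl tu ∪ P1 tu bl bu ∪ P2 tl bl bu)),
      p.2.1 + p.2.2.1 = p.1) ∧
    Module.finrank ℝ
      (affineSpan ℝ (convexHull ℝ (P0 tl tu ∪ P1 tu bl bu ∪ P2 tl bl bu))).direction = 4 := by
  set U : Set Pt := P0 tl tu ∪ P1 tu bl bu ∪ P2 tl bl bu with hU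
  set W : Submodule ℝ Pt := LinearMap.ker fhyp with hW
  have hUW : U ⊆ (W : Set Pt) := by
    intro p hp
    have hsum : p.2.1 + p.2.2.1 = p.1 := by
      rcases hp with (⟨e1, e2, e3, _⟩ | ⟨e1, e2, e3, _⟩) | ⟨e1, e2, e3, _⟩ <;>
        rw [e1, e2, e3] <;> ring
    show p ∈ LinearMap.ker fhyp
    rw [LinearMap.mem_ker]
    show p.2.1 + p.2.2.1 - p.1 = 0
    linarith
  have hspanconv : affineSpan ℝ (convexHull ℝ U) = affineSpan ℝ U :=
    affineSpan_convexHull U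
  have hle : affineSpan ℝ U ≤ W.toAffineSubspace := by
    rw [affineSpan_le]
    exact hUW
  -- membership of key points
  have ha0 : ((0, 0, 0, 0, 0) : Pt) ∈ U := by
    left; left; exact ⟨rfl, rfl, rfl, rfl, h1.le, h2.le⟩
  have ha1 : ((0, 0, 0, tu, 0) : Pt) ∈ U := by
    left; left; exact ⟨rfl, rfl, rfl, rfl, le_trans h1.le h2.le, le_refl _⟩
  have ha2 : ((1, 1, 0, 0, 0) : Pt) ∈ U := by
    left; right
    refine ⟨rfl, rfl, rfl, le_refl _, h2.le, ?_, ?_⟩ <;> simp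
  have ha3 : ((1, 0, 1, 0, 0) : Pt) ∈ U := by
    right
    refine ⟨rfl, rfl, rfl, h1.le, le_refl _, ?_, ?_⟩ <;> simp
  have ha4 : ((1, 1, 0, tu, bu * tu) : Pt) ∈ U := by
    left; right
    refine ⟨rfl, rfl, rfl, h2.le, le_refl _, ?_, le_refl _⟩
    show bl * tu ≤ bu * tu
    nlinarith
  -- vectors in the vectorSpan
  have hv2 : ((1, 1, 0, 0, 0) : Pt) ∈ vectorSpan ℝ U := by
    have := vsub_mem_vectorSpan ℝ ha2 ha0
    convert this using 1
    simp [Prod.ext_iff]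
  have hv3 : ((1, 0, 1, 0, 0) : Pt) ∈ vectorSpan ℝ U := by
    have := vsub_mem_vectorSpan ℝ ha3 ha0
    convert this using 1
    simp [Prod.ext_iff]
  have hvθ : ((0, 0, 0, 1, 0) : Pt) ∈ vectorSpan ℝ U := by
    have h := vsub_mem_vectorSpan ℝ ha1 ha0
    have h' : (tu⁻¹ : ℝ) • (((0, 0, 0, tu, 0) : Pt) -ᵥ (0, 0, 0, 0, 0)) ∈ vectorSpan ℝ U :=
      Submodule.smul_mem _ _ h
    have : (tu⁻¹ : ℝ) • (((0, 0, 0, tu, 0) : Pt) -ᵥ (0, 0, 0, 0, 0)) = ((0, 0, 0, 1, 0) : Pt) := by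
      simp [Prod.ext_iff, Prod.smul_def]
      field_simp
    rwa [this] at h'
  have hvδ : ((0, 0, 0, 0, 1) : Pt) ∈ vectorSpan ℝ U := by
    have h := vsub_mem_vectorSpan ℝ ha4 ha2
    have h' : ((bu * tu)⁻¹ : ℝ) • (((1, 1, 0, tu, bu * tu) : Pt) -ᵥ (1, 1, 0, 0, 0)) -
        (bu⁻¹ : ℝ) • ((0, 0, 0, 1, 0) : Pt) ∈ vectorSpan ℝ U :=
      Submodule.sub_mem _ (Submodule.smul_mem _ _ h) (Submodule.smul_mem _ _ hvθ)
    have heq : ((bu * tu)⁻¹ : ℝ) • (((1, 1, 0, tu, bu * tu) : Pt) -ᵥ (1, 1, 0, 0, 0)) -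
        (bu⁻¹ : ℝ) • ((0, 0, 0, 1, 0) : Pt) = ((0, 0, 0, 0, 1) : Pt) := by
      have hbu : bu * tu ≠ 0 := by positivity
      simp [Prod.ext_iff, Prod.smul_def]
      constructor
      · field_simp
        ring
      · field_simp
    rwa [heq] at h'
  have hWle : W ≤ vectorSpan ℝ U := by
    intro p hp
    have hpker : p.2.1 + p.2.2.1 - p.1 = 0 := hp
    have hdecomp : p = p.2.1 • ((1, 1, 0, 0, 0) : Pt) + p.2.2.1 • ((1, 0, 1, 0, 0) : Pt) +
        p.2.2.2.1 • ((0, 0, 0, 1, 0) : Pt) + p.2.2.2.2 • ((0, 0, 0, 0, 1) : Pt) := by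
      simp [Prod.ext_iff, Prod.smul_def]
      linarith
    rw [hdecomp]
    exact Submodule.add_mem _ (Submodule.add_mem _ (Submodule.add_mem _
      (Submodule.smul_mem _ _ hv2) (Submodule.smul_mem _ _ hv3))
      (Submodule.smul_mem _ _ hvθ)) (Submodule.smul_mem _ _ hvδ)
  have hdir : (affineSpan ℝ U).direction = W := by
    apply le_antisymm
    · have := AffineSubspace.direction_le hle
      rwa [Submodule.toAffineSubspace_direction] at this
    · rw [direction_affineSpan]
      exact hWle
  constructor
  · intro p hp
    rw [hspanconv] at hp
    have := hle hp
    have hmem : p ∈ W := this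
    have : p.2.1 + p.2.2.1 - p.1 = 0 := hmem
    linarith
  · rw [hspanconv, hdir, finrank_ker_fhyp]
end

section
/- The inequality θ̲·z⁺ + θ ≥ θ̲ is facet-defining for P = conv(P₀ ∪ P₁ ∪ P₂): it is valid on P, and the set of points of P satisfying it with equality has affine dimension 3 (one less than dim P = 4). -/
/-- The linear map cutting out the two equations satisfied on the face. -/
noncomputable def Lmap (tl : ℝ) : Pt →ₗ[ℝ] ℝ × ℝ where
  toFun p := (tl * p.2.1 + p.2.2.2.1, p.1 - p.2.1 - p.2.2.1)
  map_add' p q := by simp [Prod.ext_iff]; constructor <;> ring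
  map_smul' c p := by simp [Prod.ext_iff, smul_eq_mul]; constructor <;> ring

theorem stmt_16 (tl tu bl bu : ℝ) (h1 : tl < 0) (h2 : 0 < tu) (h3 : bl < 0) (h4 : 0 < bu) :
    (∀ p ∈ convexHull ℝ (P0 tl tu ∪ P1 tu bl bu ∪ P2 tl bl bu),
      tl * p.2.1 + p.2.2.2.1 ≥ tl) ∧
    Module.finrank ℝ
      (affineSpan ℝ {p ∈ convexHull ℝ (P0 tl tu ∪ P1 tu bl bu ∪ P2 tl bl bu) |
        tl * p.2.1 + p.2.2.2.1 = tl}).direction = 3 := by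
  set U : Set Pt := P0 tl tu ∪ P1 tu bl bu ∪ P2 tl bl bu with hU
  have hlin : IsLinearMap ℝ (fun p : Pt => tl * p.2.1 + p.2.2.2.1) := by
    constructor
    · intro p q; simp; ring
    · intro c p; simp [smul_eq_mul]; ring
  -- validity
  have hvalid : ∀ p ∈ convexHull ℝ U, tl * p.2.1 + p.2.2.2.1 ≥ tl := by
    intro p hp
    have hconv : Convex ℝ {w : Pt | tl ≤ tl * w.2.1 + w.2.2.2.1} := convex_halfSpace_ge hlin tl
    have hsub : U ⊆ {w : Pt | tl ≤ tl * w.2.1 + w.2.2.2.1} := by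
      rintro q ((hq | hq) | hq)
      · obtain ⟨_, hb, _, _, hθ, _⟩ := hq
        simp only [Set.mem_setOf_eq, hb]; linarith
      · obtain ⟨_, hb, _, hθ, _⟩ := hq
        simp only [Set.mem_setOf_eq, hb]; linarith
      · obtain ⟨_, hb, _, hθ, _⟩ := hq
        simp only [Set.mem_setOf_eq, hb]; linarith
    exact convexHull_min hsub hconv hp
  refine ⟨hvalid, ?_⟩
  -- the second equation holds on the hull
  have hlin2 : IsLinearMap ℝ (fun p : Pt => p.1 - p.2.1 - p.2.2.1) := by
    constructor
    · intro p q; simp; ring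
    · intro c p; simp [smul_eq_mul]; ring
  have hpsi : ∀ p ∈ convexHull ℝ U, p.1 - p.2.1 - p.2.2.1 = 0 := by
    intro p hp
    have hconv : Convex ℝ {w : Pt | (fun p : Pt => p.1 - p.2.1 - p.2.2.1) w = 0} :=
      convex_hyperplane hlin2 0
    have hsub : U ⊆ {w : Pt | (fun p : Pt => p.1 - p.2.1 - p.2.2.1) w = 0} := by
      rintro q ((hq | hq) | hq) <;>
        · obtain ⟨ha, hb, hc, _⟩ := hq
          simp only [Set.mem_setOf_eq, ha, hb, hc]; ring
    exact convexHull_min hsub hconv hp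
  set F : Set Pt := {p ∈ convexHull ℝ U | tl * p.2.1 + p.2.2.2.1 = tl} with hF
  rw [direction_affineSpan]
  -- the four points
  set a : Pt := (0, 0, 0, tl, 0) with ha
  set b : Pt := (1, 1, 0, 0, 0) with hb
  set c : Pt := (1, 0, 1, tl, bu * tl) with hc
  set d : Pt := (1, 0, 1, tl, bl * tl) with hd
  have haU : a ∈ U := Or.inl (Or.inl ⟨rfl, rfl, rfl, rfl, le_refl _, by linarith⟩)
  have hbU : b ∈ U := Or.inl (Or.inr ⟨rfl, rfl, rfl, le_refl _, le_of_lt h2, by norm_num⟩)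
  have hcU : c ∈ U := by
    refine Or.inr ⟨rfl, rfl, rfl, le_refl _, le_of_lt h1, le_refl _, ?_⟩
    show bu * tl ≤ bl * tl; nlinarith
  have hdU : d ∈ U := by
    refine Or.inr ⟨rfl, rfl, rfl, le_refl _, le_of_lt h1, ?_, le_refl _⟩
    show bu * tl ≤ bl * tl; nlinarith
  have haF : a ∈ F := ⟨subset_convexHull ℝ U haU, by simp [ha]⟩
  have hbF : b ∈ F := ⟨subset_convexHull ℝ U hbU, by simp [hb]⟩
  have hcF : c ∈ F := ⟨subset_convexHull ℝ U hcU, by simp [hc]⟩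
  have hdF : d ∈ F := ⟨subset_convexHull ℝ U hdU, by simp [hd]⟩
  -- kernel bound
  have hker : vectorSpan ℝ F ≤ LinearMap.ker (Lmap tl) := by
    rw [vectorSpan_def, Submodule.span_le]
    rintro v ⟨p, hp, q, hq, rfl⟩
    have hp1 := hp.2; have hq1 := hq.2
    have hp2 := hpsi p hp.1; have hq2 := hpsi q hq.1
    simp only [SetLike.mem_coe, LinearMap.mem_ker, Lmap, LinearMap.coe_mk, AddHom.coe_mk,
      vsub_eq_sub, Prod.fst_sub, Prod.snd_sub, Prod.ext_iff, Prod.fst_zero, Prod.snd_zero]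
    refine ⟨?_, ?_⟩
    · linear_combination hp1 - hq1
    · linear_combination hp2 - hq2
  have hranktop : LinearMap.range (Lmap tl) = ⊤ := by
    rw [LinearMap.range_eq_top]
    intro ⟨x, y⟩
    exact ⟨(y, 0, 0, x, 0), by simp [Lmap]⟩
  have hPt5 : Module.finrank ℝ Pt = 5 := by
    simp [Module.finrank_prod, Module.finrank_self]
  have hker3 : Module.finrank ℝ (LinearMap.ker (Lmap tl)) = 3 := by
    have := LinearMap.finrank_range_add_finrank_ker (Lmap tl)
    rw [hranktop, finrank_top, hPt5] at this
    have h2' : Module.finrank ℝ (ℝ × ℝ) = 2 := by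
      simp [Module.finrank_prod, Module.finrank_self]
    omega
  have hle : Module.finrank ℝ (vectorSpan ℝ F) ≤ 3 := by
    rw [← hker3]; exact Submodule.finrank_mono hker
  -- lower bound: three independent vectors in the vectorSpan
  set v1 : Pt := b - a with hv1
  set v2 : Pt := c - a with hv2
  set v3 : Pt := d - a with hv3
  have hm1 : v1 ∈ vectorSpan ℝ F := vsub_mem_vectorSpan ℝ hbF haF
  have hm2 : v2 ∈ vectorSpan ℝ F := vsub_mem_vectorSpan ℝ hcF haF
  have hm3 : v3 ∈ vectorSpan ℝ F := vsub_mem_vectorSpan ℝ hdF haF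
  have hind : LinearIndependent ℝ ![v1, v2, v3] := by
    rw [Fintype.linearIndependent_iff]
    intro g hg
    have h0 : ∑ i : Fin 3, g i • ![v1, v2, v3] i =
        g 0 • v1 + g 1 • v2 + g 2 • v3 := by
      simp [Fin.sum_univ_three]
    rw [h0] at hg
    simp only [hv1, hv2, hv3, ha, hb, hc, hd, Prod.ext_iff, Prod.smul_mk, Prod.mk_add_mk,
      Prod.mk_sub_mk, smul_eq_mul, Prod.fst_add, Prod.snd_add, Prod.fst_sub, Prod.snd_sub,
      Prod.smul_fst, Prod.smul_snd, Prod.fst_zero, Prod.snd_zero] at hg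
    obtain ⟨e1, e2, e3, e4, e5⟩ := hg
    have hg0 : g 0 = 0 := by linarith [e2]
    have hgs : g 1 + g 2 = 0 := by linarith [e3]
    have key : g 1 * (bu * tl - bl * tl) = 0 := by linear_combination e5 - (bl * tl) * hgs
    have hg1 : g 1 = 0 := by
      rcases mul_eq_zero.mp key with h | h
      · exact h
      · nlinarith
    have hg2 : g 2 = 0 := by linarith
    intro i; fin_cases i <;> assumption
  have hgt : 3 ≤ Module.finrank ℝ (vectorSpan ℝ F) := by
    set S := vectorSpan ℝ F
    have : LinearIndependent ℝ (fun i : Fin 3 => (![⟨v1, hm1⟩, ⟨v2, hm2⟩, ⟨v3, hm3⟩] i : S)) := by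
      apply LinearIndependent.of_comp S.subtype
      convert hind using 1
      funext i; fin_cases i <;> rfl
      all_goals rfl
    simpa using this.fintype_card_le_finrank
  omega
end

section
/- The inequality δp ≥ θ̄·δB̲·z⁺ + θ̲·δB̄·z⁻ is facet-defining for P = conv(P₀ ∪ P₁ ∪ P₂): it is valid on P and tight at the four affinely independent extreme points (0,0,0,θ̲,0), (0,0,0,θ̄,0), (1,1,0,θ̄,θ̄·δB̲), and (1,0,1,θ̲,θ̲·δB̄). -/
def facetSlack (tl tu bl bu : ℝ) : Pt →ₗ[ℝ] ℝ where
  toFun p := p.2.2.2.2 - tu * bl * p.2.1 - tl * bu * p.2.2.1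
  map_add' p q := by simp only [Prod.snd_add, Prod.fst_add]; ring
  map_smul' c p := by simp only [Prod.smul_snd, Prod.smul_fst, smul_eq_mul, RingHom.id_apply]; ring

lemma facetSlack_apply (tl tu bl bu : ℝ) (p : Pt) :
    facetSlack tl tu bl bu p = p.2.2.2.2 - tu * bl * p.2.1 - tl * bu * p.2.2.1 := rfl

lemma facetSlack_nonneg_of_mem_P0 {tl tu bl bu : ℝ} {p : Pt} (hp : p ∈ P0 tl tu) :
    0 ≤ facetSlack tl tu bl bu p := by
  obtain ⟨-, hz₁, hz₂, hδ, -⟩ := hp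
  simp [facetSlack_apply, hz₁, hz₂, hδ]

lemma facetSlack_nonneg_of_mem_P1 {tl tu bl bu : ℝ} (hbl : bl ≤ 0) {p : Pt}
    (hp : p ∈ P1 tu bl bu) : 0 ≤ facetSlack tl tu bl bu p := by
  obtain ⟨-, hz₁, hz₂, -, hθ, hδ, -⟩ := hp
  have : bl * tu ≤ bl * p.2.2.2.1 := mul_le_mul_of_nonpos_left hθ hbl
  simp only [facetSlack_apply, hz₁, hz₂]
  linarith

lemma facetSlack_nonneg_of_mem_P2 {tl tu bl bu : ℝ} (hbu : 0 ≤ bu) {p : Pt}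
    (hp : p ∈ P2 tl bl bu) : 0 ≤ facetSlack tl tu bl bu p := by
  obtain ⟨-, hz₁, hz₂, hθ, -, hδ, -⟩ := hp
  have : bu * tl ≤ bu * p.2.2.2.1 := mul_le_mul_of_nonneg_left hθ hbu
  simp only [facetSlack_apply, hz₁, hz₂]
  linarith

lemma facetSlack_nonneg_of_mem_convexHull {tl tu bl bu : ℝ} (hbl : bl ≤ 0) (hbu : 0 ≤ bu)
    {p : Pt} (hp : p ∈ convexHull ℝ (P0 tl tu ∪ P1 tu bl bu ∪ P2 tl bl bu)) :
    0 ≤ facetSlack tl tu bl bu p := by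
  obtain ⟨q, hq, hqp⟩ :=
    ((facetSlack tl tu bl bu).concaveOn convex_univ).exists_le_of_mem_convexHull
      (Set.subset_univ _) hp
  refine le_trans ?_ hqp
  rcases hq with (hq | hq) | hq
  · exact facetSlack_nonneg_of_mem_P0 hq
  · exact facetSlack_nonneg_of_mem_P1 hbl hq
  · exact facetSlack_nonneg_of_mem_P2 hbu hq

lemma affineIndependent_tight_points {tl tu : ℝ} (h : tl ≠ tu) (bl bu : ℝ) :
    AffineIndependent ℝ
      ![(((0:ℝ),(0:ℝ),(0:ℝ),tl,(0:ℝ)) : Pt), ((0:ℝ),(0:ℝ),(0:ℝ),tu,(0:ℝ)),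
        ((1:ℝ),(1:ℝ),(0:ℝ),tu,tu*bl), ((1:ℝ),(0:ℝ),(1:ℝ),tl,tl*bu)] := by
  rw [affineIndependent_iff_of_fintype]
  intro w hw hcomb
  rw [Finset.weightedVSub_eq_linear_combination _ hw, Fin.sum_univ_four] at hcomb
  rw [Fin.sum_univ_four] at hw
  simp only [Matrix.cons_val, Prod.smul_mk, smul_eq_mul, Prod.mk_add_mk, Prod.mk_eq_zero,
    mul_zero, mul_one, add_zero, zero_add] at hcomb
  obtain ⟨-, hw₂, hw₃, hθ, -⟩ := hcomb
  have hw₀ : (tl - tu) * w 0 = 0 := by linear_combination hθ - tu * hw + (tu - tl) * hw₃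
  have hw₀ : w 0 = 0 := (mul_eq_zero.mp hw₀).resolve_left (sub_ne_zero.mpr h)
  intro i
  fin_cases i <;> simp only [Fin.zero_eta, Fin.mk_one, Fin.reduceFinMk] <;> linarith

theorem stmt_17 (tl tu bl bu : ℝ) (h1 : tl < 0) (h2 : 0 < tu) (h3 : bl < 0) (h4 : 0 < bu) :
    (∀ p ∈ convexHull ℝ (P0 tl tu ∪ P1 tu bl bu ∪ P2 tl bl bu),
      p.2.2.2.2 ≥ tu * bl * p.2.1 + tl * bu * p.2.2.1) ∧
    (∀ p ∈ ({((0:ℝ),(0:ℝ),(0:ℝ),tl,(0:ℝ)), ((0:ℝ),(0:ℝ),(0:ℝ),tu,(0:ℝ)),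
        ((1:ℝ),(1:ℝ),(0:ℝ),tu,tu*bl), ((1:ℝ),(0:ℝ),(1:ℝ),tl,tl*bu)} : Set Pt),
      p.2.2.2.2 = tu * bl * p.2.1 + tl * bu * p.2.2.1) ∧
    AffineIndependent ℝ
      ![(((0:ℝ),(0:ℝ),(0:ℝ),tl,(0:ℝ)) : Pt), ((0:ℝ),(0:ℝ),(0:ℝ),tu,(0:ℝ)),
        ((1:ℝ),(1:ℝ),(0:ℝ),tu,tu*bl), ((1:ℝ),(0:ℝ),(1:ℝ),tl,tl*bu)] := by
  refine ⟨fun p hp => ?_, ?_, affineIndependent_tight_points (h1.trans h2).ne bl bu⟩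
  · have := facetSlack_nonneg_of_mem_convexHull h3.le h4.le hp
    rw [facetSlack_apply] at this
    linarith
  · rintro p (rfl | rfl | rfl | rfl) <;> simp
end
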